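/- Let s ∈ (0,1) and γ = 1 − 2s. On the open upper half-plane H = {(x₁, y) ∈ ℝ² : y > 0} define u₀(x₁, y) = (1/(1−s²)) ρ^{1+s} ( 2 (cos(θ/2))^{2(s+1)} − (1+s)(cos(θ/2))^{2s} ), where ρ = √(x₁² + y²) and θ ∈ (0, π) is the polar angle determined by cos θ = x₁/ρ and sin θ = y/ρ. Then: (i) u₀ satisfies the degenerate Laplace equation Δu₀ + (γ/y) ∂_y u₀ = 0 at every point of H; (ii) u₀ extends continuously to the closed half-plane minus the origin, with boundary values u₀(x₁, 0) = 0 for x₁ < 0 and u₀(x₁, 0) = x₁^{1+s}/(1+s) for x₁ > 0; (iii) u₀ is homogeneous of degree 1 + s, i.e. u₀(λ x₁, λ y) = λ^{1+s} u₀(x₁, y) for all λ > 0 and (x₁,y) ∈ H. -/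

import Mathlib

open MeasureTheory Real

/-- Partial derivative in the first variable for functions on `ℝ²`. -/
noncomputable def pd1 (f : ℝ × ℝ → ℝ) (p : ℝ × ℝ) : ℝ :=
  deriv (fun s : ℝ => f (s, p.2)) p.1

/-- Partial derivative in the second variable for functions on `ℝ²`. -/
noncomputable def pd2 (f : ℝ × ℝ → ℝ) (p : ℝ × ℝ) : ℝ :=
  deriv (fun s : ℝ => f (p.1, s)) p.2

/-- The blow-up profile
`u₀ = (1/(1−s²)) ρ^{1+s} (2 cos^{2(s+1)}(θ/2) − (1+s) cos^{2s}(θ/2))` in polar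
coordinates `ρ = √(x₁²+y²)`, `θ = arccos(x₁/ρ) ∈ (0,π)` on the upper half-plane. -/
noncomputable def u₀ (s : ℝ) (p : ℝ × ℝ) : ℝ :=
  (1 / (1 - s ^ 2)) * (Real.sqrt (p.1 ^ 2 + p.2 ^ 2)) ^ (1 + s) *
    (2 * (Real.cos (Real.arccos (p.1 / Real.sqrt (p.1 ^ 2 + p.2 ^ 2)) / 2)) ^ (2 * (s + 1))
      - (1 + s) * (Real.cos (Real.arccos (p.1 / Real.sqrt (p.1 ^ 2 + p.2 ^ 2)) / 2)) ^ (2 * s))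

/-
Since `cos²(θ/2) = (1 + cos θ)/2 = (ρ + x₁)/(2ρ)`, the profile has the algebraic closed form
`u₀ = 2^{-s} (1 - s²)⁻¹ (ρ + x₁)^s (x₁ - sρ)`. In this form `∂₁u₀ = 2^{-s} (ρ + x₁)^s` and
`∂_y u₀ = -(s/(1 - s)) 2^{-s} y (ρ + x₁)^{s-1}`, and the equation reduces to the identity
`(ρ + x₁)² + y² = 2ρ(ρ + x₁)`. On the boundary `ρ + x₁` is `0` for `x₁ < 0` and `2x₁` for `x₁ > 0`,
and homogeneity is clear because `ρ` and `x₁` are both of degree one.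
-/

lemma cos_half_arccos_rpow_two_mul {t : ℝ} (ht₀ : -1 ≤ t) (ht₁ : t ≤ 1) (a : ℝ) :
    cos (arccos t / 2) ^ (2 * a) = ((1 + t) / 2) ^ a := by
  have hθ : -π ≤ arccos t := by linarith [arccos_nonneg t, pi_pos]
  rw [cos_half hθ (arccos_le_pi t), cos_arccos ht₀ ht₁,
    show (2 : ℝ) * a = (2 : ℕ) * a by norm_num, rpow_natCast_mul (sqrt_nonneg _),
    sq_sqrt (by linarith)]

lemma abs_le_sqrt_sq_add_sq (x y : ℝ) : |x| ≤ √(x ^ 2 + y ^ 2) := by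
  rw [← sqrt_sq_eq_abs]
  exact sqrt_le_sqrt (by nlinarith)

lemma sqrt_sq_add_sq_add_nonneg (x y : ℝ) : 0 ≤ √(x ^ 2 + y ^ 2) + x := by
  linarith [neg_abs_le x, abs_le_sqrt_sq_add_sq x y]

lemma sqrt_sq_add_sq_add_pos {x y : ℝ} (hy : y ≠ 0) : 0 < √(x ^ 2 + y ^ 2) + x := by
  have hlt : |x| < √(x ^ 2 + y ^ 2) := by
    rw [← sqrt_sq_eq_abs]
    exact sqrt_lt_sqrt (sq_nonneg x) (by simpa using pow_pos (abs_pos.mpr hy) 2)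
  linarith [neg_abs_le x]

noncomputable def unnormalizedProfile (s : ℝ) (p : ℝ × ℝ) : ℝ :=
  (√(p.1 ^ 2 + p.2 ^ 2) + p.1) ^ s * (p.1 - s * √(p.1 ^ 2 + p.2 ^ 2))

lemma u₀_eq_mul_unnormalizedProfile (s : ℝ) (p : ℝ × ℝ) :
    u₀ s p = 2 ^ (-s) / (1 - s ^ 2) * unnormalizedProfile s p := by
  -- at `s = -1` both sides are `0` because `1 / (1 - s²) = 0`
  rcases eq_or_ne s (-1) with rfl | hs
  · norm_num [u₀]
  obtain ⟨x, y⟩ := p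
  simp only [u₀, unnormalizedProfile]
  set ρ := √(x ^ 2 + y ^ 2)
  suffices key : ρ ^ (1 + s) * (2 * cos (arccos (x / ρ) / 2) ^ (2 * (s + 1))
      - (1 + s) * cos (arccos (x / ρ) / 2) ^ (2 * s)) = 2 ^ (-s) * ((ρ + x) ^ s * (x - s * ρ)) by
    rw [mul_assoc, key]; ring
  rcases (show 0 ≤ ρ from sqrt_nonneg _).eq_or_lt with hρ | hρ
  · have hx : x = 0 := by simpa [ρ, ← hρ] using abs_le_sqrt_sq_add_sq x y
    rw [← hρ, zero_rpow (by contrapose! hs; linarith)]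
    simp [hx]
  have habs : |x / ρ| ≤ 1 := by
    rw [abs_div, abs_of_pos hρ, div_le_one hρ]; exact abs_le_sqrt_sq_add_sq x y
  have hA : 0 ≤ ρ + x := sqrt_sq_add_sq_add_nonneg x y
  have hT : (1 + x / ρ) / 2 = (ρ + x) / (2 * ρ) := by field_simp
  rw [cos_half_arccos_rpow_two_mul (neg_le_of_abs_le habs) (le_of_abs_le habs),
    cos_half_arccos_rpow_two_mul (neg_le_of_abs_le habs) (le_of_abs_le habs), hT,
    rpow_add_one' (by positivity) (by contrapose! hs; linarith),
    div_rpow hA (by positivity), mul_rpow (by norm_num) hρ.le, add_comm 1 s,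
    rpow_add_one hρ.ne', rpow_neg (by norm_num)]
  have : (2 : ℝ) ^ s * ρ ^ s ≠ 0 := by positivity
  field_simp
  ring

section PartialDerivatives

variable {x y : ℝ}

lemma hasDerivAt_sqrt_sq_add_sq_left (h : x ^ 2 + y ^ 2 ≠ 0) :
    HasDerivAt (fun t => √(t ^ 2 + y ^ 2)) (x / √(x ^ 2 + y ^ 2)) x := by
  have h₁ : HasDerivAt (fun t : ℝ => t ^ 2 + y ^ 2) (2 * x) x := by
    simpa using (hasDerivAt_pow 2 x).add_const (y ^ 2)
  refine ((hasDerivAt_sqrt h).comp x h₁).congr_deriv ?_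
  field_simp

lemma hasDerivAt_sqrt_sq_add_sq_right (h : x ^ 2 + y ^ 2 ≠ 0) :
    HasDerivAt (fun t => √(x ^ 2 + t ^ 2)) (y / √(x ^ 2 + y ^ 2)) y := by
  have h₁ : HasDerivAt (fun t : ℝ => x ^ 2 + t ^ 2) (2 * y) y := by
    simpa using (hasDerivAt_pow 2 y).const_add (x ^ 2)
  refine ((hasDerivAt_sqrt h).comp y h₁).congr_deriv ?_
  field_simp

lemma hasDerivAt_sqrt_sq_add_sq_add_rpow_left (a : ℝ) (hy : y ≠ 0) :
    HasDerivAt (fun t => (√(t ^ 2 + y ^ 2) + t) ^ a)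
      (a * (√(x ^ 2 + y ^ 2) + x) ^ a / √(x ^ 2 + y ^ 2)) x := by
  have hA := sqrt_sq_add_sq_add_pos (x := x) hy
  refine (((hasDerivAt_sqrt_sq_add_sq_left (by positivity)).add (hasDerivAt_id x)).rpow_const
    (p := a) (Or.inl hA.ne')).congr_deriv ?_
  simp only [Pi.add_apply, id, rpow_sub_one hA.ne']
  field_simp
  ring

lemma hasDerivAt_sqrt_sq_add_sq_add_rpow_right (a : ℝ) (hy : y ≠ 0) :
    HasDerivAt (fun t => (√(x ^ 2 + t ^ 2) + x) ^ a)
      (a * y * (√(x ^ 2 + y ^ 2) + x) ^ (a - 1) / √(x ^ 2 + y ^ 2)) y := by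
  refine (((hasDerivAt_sqrt_sq_add_sq_right (by positivity)).add_const x).rpow_const
    (p := a) (Or.inl (sqrt_sq_add_sq_add_pos hy).ne')).congr_deriv ?_
  ring

lemma hasDerivAt_unnormalizedProfile_left (s : ℝ) (hy : y ≠ 0) :
    HasDerivAt (fun t => unnormalizedProfile s (t, y))
      ((1 - s ^ 2) * (√(x ^ 2 + y ^ 2) + x) ^ s) x := by
  refine ((hasDerivAt_sqrt_sq_add_sq_add_rpow_left s hy).mul
    ((hasDerivAt_id x).sub ((hasDerivAt_sqrt_sq_add_sq_left (by positivity)).const_mul s))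
    ).congr_deriv ?_
  simp only [Pi.sub_apply, id]
  field_simp
  ring

lemma hasDerivAt_unnormalizedProfile_right (s : ℝ) (hy : y ≠ 0) :
    HasDerivAt (fun t => unnormalizedProfile s (x, t))
      (-(s * (1 + s)) * (y * (√(x ^ 2 + y ^ 2) + x) ^ (s - 1))) y := by
  have hA := sqrt_sq_add_sq_add_pos (x := x) hy
  refine ((hasDerivAt_sqrt_sq_add_sq_add_rpow_right s hy).mul
    (((hasDerivAt_sqrt_sq_add_sq_right (by positivity)).const_mul s).const_sub x)).congr_deriv ?_
  rw [rpow_sub_one hA.ne']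
  field_simp
  ring

lemma pd1_unnormalizedProfile (s : ℝ) (hy : y ≠ 0) :
    pd1 (unnormalizedProfile s) (x, y) = (1 - s ^ 2) * (√(x ^ 2 + y ^ 2) + x) ^ s :=
  (hasDerivAt_unnormalizedProfile_left s hy).deriv

lemma pd1_pd1_unnormalizedProfile (s : ℝ) (hy : y ≠ 0) :
    pd1 (pd1 (unnormalizedProfile s)) (x, y)
      = (1 - s ^ 2) * (s * (√(x ^ 2 + y ^ 2) + x) ^ s / √(x ^ 2 + y ^ 2)) := by
  show deriv (fun t => pd1 (unnormalizedProfile s) (t, y)) x = _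
  simp only [pd1_unnormalizedProfile s hy]
  exact ((hasDerivAt_sqrt_sq_add_sq_add_rpow_left s hy).const_mul _).deriv

lemma pd2_unnormalizedProfile (s : ℝ) (hy : y ≠ 0) :
    pd2 (unnormalizedProfile s) (x, y) = -(s * (1 + s)) * (y * (√(x ^ 2 + y ^ 2) + x) ^ (s - 1)) :=
  (hasDerivAt_unnormalizedProfile_right s hy).deriv

lemma pd2_pd2_unnormalizedProfile (s : ℝ) (hy : y ≠ 0) :
    pd2 (pd2 (unnormalizedProfile s)) (x, y)
      = -(s * (1 + s)) * ((√(x ^ 2 + y ^ 2) + x) ^ (s - 1)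
          + y * ((s - 1) * y * (√(x ^ 2 + y ^ 2) + x) ^ (s - 1 - 1) / √(x ^ 2 + y ^ 2))) := by
  show deriv (fun t => pd2 (unnormalizedProfile s) (x, t)) y = _
  have hev : (fun t => pd2 (unnormalizedProfile s) (x, t)) =ᶠ[nhds y]
      fun t => -(s * (1 + s)) * (t * (√(x ^ 2 + t ^ 2) + x) ^ (s - 1)) := by
    filter_upwards [isOpen_ne.mem_nhds hy] with t ht
    exact pd2_unnormalizedProfile s ht
  rw [hev.deriv_eq]
  refine ((((hasDerivAt_id' y).mul
    (hasDerivAt_sqrt_sq_add_sq_add_rpow_right (s - 1) hy)).const_mul _).congr_deriv ?_).deriv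
  ring

end PartialDerivatives

lemma unnormalizedProfile_degenerateLaplace (s : ℝ) {p : ℝ × ℝ} (hy : p.2 ≠ 0) :
    pd1 (pd1 (unnormalizedProfile s)) p + pd2 (pd2 (unnormalizedProfile s)) p
      + ((1 - 2 * s) / p.2) * pd2 (unnormalizedProfile s) p = 0 := by
  obtain ⟨x, y⟩ := p
  rw [pd1_pd1_unnormalizedProfile s hy, pd2_pd2_unnormalizedProfile s hy,
    pd2_unnormalizedProfile s hy]
  have hA := sqrt_sq_add_sq_add_pos (x := x) hy
  have hρ2 : √(x ^ 2 + y ^ 2) ^ 2 = x ^ 2 + y ^ 2 := sq_sqrt (by positivity)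
  simp only [rpow_sub_one hA.ne'] at *
  field_simp
  linear_combination (-s * (1 - s ^ 2) * (√(x ^ 2 + y ^ 2) + x) ^ s) * hρ2

lemma pd1_const_mul (c : ℝ) (f : ℝ × ℝ → ℝ) : pd1 (fun p => c * f p) = fun p => c * pd1 f p := by
  funext p
  exact congrFun (deriv_const_mul_field' c) p.1

lemma pd2_const_mul (c : ℝ) (f : ℝ × ℝ → ℝ) : pd2 (fun p => c * f p) = fun p => c * pd2 f p := by
  funext p
  exact congrFun (deriv_const_mul_field' c) p.2

lemma u₀_degenerateLaplace (s : ℝ) {p : ℝ × ℝ} (hy : p.2 ≠ 0) :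
    pd1 (pd1 (u₀ s)) p + pd2 (pd2 (u₀ s)) p + ((1 - 2 * s) / p.2) * pd2 (u₀ s) p = 0 := by
  rw [funext (u₀_eq_mul_unnormalizedProfile s), pd1_const_mul, pd1_const_mul, pd2_const_mul,
    pd2_const_mul]
  linear_combination (2 ^ (-s) / (1 - s ^ 2)) * unnormalizedProfile_degenerateLaplace s hy

lemma continuous_unnormalizedProfile {s : ℝ} (hs : 0 ≤ s) : Continuous (unnormalizedProfile s) := by
  unfold unnormalizedProfile
  have hρ : Continuous fun p : ℝ × ℝ => √(p.1 ^ 2 + p.2 ^ 2) := by fun_prop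
  exact ((continuous_rpow_const hs).comp (hρ.add continuous_fst)).mul
    (continuous_fst.sub (continuous_const.mul hρ))

lemma continuous_u₀ {s : ℝ} (hs : 0 ≤ s) : Continuous (u₀ s) := by
  rw [funext (u₀_eq_mul_unnormalizedProfile s)]
  exact continuous_const.mul (continuous_unnormalizedProfile hs)

lemma u₀_of_neg {s x : ℝ} (hs : s ≠ 0) (hx : x < 0) : u₀ s (x, 0) = 0 := by
  have hρ : √(x ^ 2 + 0 ^ 2) = -x := by
    rw [zero_pow two_ne_zero, add_zero, ← neg_sq, sqrt_sq (by linarith)]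
  rw [u₀_eq_mul_unnormalizedProfile, unnormalizedProfile, hρ, neg_add_cancel, zero_rpow hs]
  ring

lemma u₀_of_pos {s x : ℝ} (hs : 1 - s ^ 2 ≠ 0) (hx : 0 < x) :
    u₀ s (x, 0) = x ^ (1 + s) / (1 + s) := by
  have hρ : √(x ^ 2 + 0 ^ 2) = x := by
    rw [zero_pow two_ne_zero, add_zero, sqrt_sq hx.le]
  have h1s : 1 + s ≠ 0 := fun h => hs (by linear_combination (1 - s) * h)
  simp only [u₀_eq_mul_unnormalizedProfile, unnormalizedProfile, hρ, ← two_mul,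
    mul_rpow zero_le_two hx.le, rpow_add hx, rpow_one, rpow_neg zero_le_two]
  have : (2 : ℝ) ^ s ≠ 0 := by positivity
  field_simp
  ring

lemma unnormalizedProfile_homogeneous (s : ℝ) {lam : ℝ} (hlam : 0 < lam) (p : ℝ × ℝ) :
    unnormalizedProfile s (lam * p.1, lam * p.2) = lam ^ (1 + s) * unnormalizedProfile s p := by
  obtain ⟨x, y⟩ := p
  have hρ : √((lam * x) ^ 2 + (lam * y) ^ 2) = lam * √(x ^ 2 + y ^ 2) := by
    rw [show (lam * x) ^ 2 + (lam * y) ^ 2 = lam ^ 2 * (x ^ 2 + y ^ 2) by ring,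
      sqrt_mul (by positivity), sqrt_sq hlam.le]
  simp only [unnormalizedProfile, hρ, ← mul_add,
    mul_rpow hlam.le (sqrt_sq_add_sq_add_nonneg x y), rpow_add hlam, rpow_one]
  ring

lemma u₀_homogeneous (s : ℝ) {lam : ℝ} (hlam : 0 < lam) (p : ℝ × ℝ) :
    u₀ s (lam * p.1, lam * p.2) = lam ^ (1 + s) * u₀ s p := by
  simp only [u₀_eq_mul_unnormalizedProfile, unnormalizedProfile_homogeneous s hlam]
  ring

/-- the blow-up profile `u₀` (i) solves the degenerate Laplace equation
`Δu₀ + (γ/y)∂_y u₀ = 0` in the upper half-plane (γ = 1 − 2s), (ii) extends continuously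
to the closed half-plane minus the origin with boundary values `0` for `x₁ < 0` and
`x₁^{1+s}/(1+s)` for `x₁ > 0`, and (iii) is homogeneous of degree `1+s`. -/
theorem stmt_15 (s γ : ℝ) (hs : s ∈ Set.Ioo (0 : ℝ) 1) (hγ : γ = 1 - 2 * s) :
    (∀ p : ℝ × ℝ, 0 < p.2 →
      pd1 (pd1 (u₀ s)) p + pd2 (pd2 (u₀ s)) p + (γ / p.2) * pd2 (u₀ s) p = 0) ∧
    ContinuousOn (u₀ s) {p : ℝ × ℝ | 0 ≤ p.2 ∧ p ≠ 0} ∧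
    (∀ x : ℝ, x < 0 → u₀ s (x, 0) = 0) ∧
    (∀ x : ℝ, 0 < x → u₀ s (x, 0) = x ^ (1 + s) / (1 + s)) ∧
    (∀ lam : ℝ, 0 < lam → ∀ p : ℝ × ℝ, 0 < p.2 →
      u₀ s (lam * p.1, lam * p.2) = lam ^ (1 + s) * u₀ s p) := by
  obtain ⟨hs₀, hs₁⟩ := hs
  subst hγ
  have hs2 : 1 - s ^ 2 ≠ 0 := by nlinarith
  exact ⟨fun p hy => u₀_degenerateLaplace s hy.ne', (continuous_u₀ hs₀.le).continuousOn,
    fun x hx => u₀_of_neg hs₀.ne' hx, fun x hx => u₀_of_pos hs2 hx,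
    fun lam hlam p _ => u₀_homogeneous s hlam p⟩
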